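/- Let c : ℕ → ℝ be defined by c(n) = 0 for n ≤ 3 and, for n ≥ 4, c(n) = c(⌊n/2⌋) + c(⌊n/2⌋ − 1) + (3/2)·n + (1/2)·(n mod 2). Then c is strictly increasing on {n : n ≥ 3}, i.e., c(n+1) > c(n) for all n ≥ 3. -/

import Mathlib

/-!
From the recurrence, `c (2m+1) - c (2m) = 2` and `c (2m+2) - c (2m+1) = c (m+1) - c (m-1) + 1`.
So once `c` is known to be monotone, every increment from `n ≥ 4` on is at least `1`, and
monotonicity itself follows by strong induction from the same two identities; the remaining
step `c 3 = 0 < 6 = c 4` is a direct computation.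
-/

def TimsortRecurrence (c : ℕ → ℝ) : Prop :=
  ∀ n, 4 ≤ n → c n = c (n / 2) + c (n / 2 - 1) + 3 / 2 * (n : ℝ) + 1 / 2 * ((n % 2 : ℕ) : ℝ)

namespace TimsortRecurrence

variable {c : ℕ → ℝ}

theorem cost_four (hc : TimsortRecurrence c) (h0 : ∀ n ≤ 3, c n = 0) : c 4 = 6 := by
  rw [hc 4 le_rfl]
  norm_num [h0 1 (by norm_num), h0 2 (by norm_num)]

theorem add_one_le_succ (hc : TimsortRecurrence c) {n : ℕ} (hn : 4 ≤ n)
    (h : c (n / 2 - 1) ≤ c (n / 2 + 1)) : c n + 1 ≤ c (n + 1) := by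
  rw [hc n hn, hc (n + 1) (by omega)]
  obtain ⟨m, rfl | rfl⟩ := Nat.even_or_odd' n
  · have hhalf : 2 * m / 2 = m := by omega
    have hhalf' : (2 * m + 1) / 2 = m := by omega
    have hmod : 2 * m % 2 = 0 := by omega
    have hmod' : (2 * m + 1) % 2 = 1 := by omega
    simp only [hhalf, hhalf', hmod, hmod']
    push_cast
    linarith
  · have hhalf : (2 * m + 1) / 2 = m := by omega
    have hhalf' : (2 * m + 1 + 1) / 2 = m + 1 := by omega
    have hmod : (2 * m + 1) % 2 = 1 := by omega
    have hmod' : (2 * m + 1 + 1) % 2 = 0 := by omega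
    simp only [hhalf, hhalf', hmod, hmod', Nat.add_sub_cancel] at h ⊢
    push_cast
    linarith

theorem monotone (hc : TimsortRecurrence c) (h0 : ∀ n ≤ 3, c n = 0) : Monotone c := by
  refine monotone_nat_of_le_succ fun n => ?_
  induction n using Nat.strong_induction_on with
  | _ n ih =>
    rcases Nat.lt_or_ge n 4 with hn | hn
    · interval_cases n <;> norm_num [h0, hc.cost_four h0]
    · have hhalf : c (n / 2 - 1) ≤ c (n / 2 + 1) := by
        have hlow := ih (n / 2 - 1) (by omega)
        rw [Nat.sub_add_cancel (by omega)] at hlow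
        exact hlow.trans (ih (n / 2) (by omega))
      linarith [hc.add_one_le_succ hn hhalf]

end TimsortRecurrence

theorem timsort_cost_strict_mono (c : ℕ → ℝ)
    (h0 : ∀ n ≤ 3, c n = 0)
    (hrec : ∀ n, 4 ≤ n →
      c n = c (n / 2) + c (n / 2 - 1) + 3 / 2 * (n : ℝ) + 1 / 2 * ((n % 2 : ℕ) : ℝ)) :
    ∀ n, 3 ≤ n → c n < c (n + 1) := by
  intro n hn
  rcases hn.eq_or_lt with rfl | hn
  · rw [h0 3 le_rfl, TimsortRecurrence.cost_four hrec h0]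
    norm_num
  · have hhalf := TimsortRecurrence.monotone hrec h0 (show n / 2 - 1 ≤ n / 2 + 1 by omega)
    linarith [TimsortRecurrence.add_one_le_succ hrec hn hhalf]
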